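/- arXiv:2305.01037 — 2 statements merged into one kernel-verified Lean document; each statement's English description precedes it below -/
import Mathlib

section
/- Let p > 1, η ∈ (1, p), c ∈ ℝ, and define f(x) = x^{p−1} ln x + c x^{η−1} for x ≥ 1, with F(x) = ∫₁ˣ f(s) ds. Then for every ϑ > p and every M ≥ 1 there exists x ≥ M such that ϑ F(x) > f(x)·x. In other words, there are no ϑ > p and M ≥ 1 with ϑ F(x) ≤ f(x)x for all x ≥ M: the Ambrosetti–Rabinowitz condition fails for f. -/
/-!
With `G x = x^p log x / p - x^p / p^2 + c x^η / η` one has `G' = f` on `[1, ∞)`, so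
`F = G - G 1` there and `ϑ F(x) - f(x) x = (ϑ/p - 1) x^p log x + O(x^p)`. Since `ϑ > p`
the leading coefficient is positive, so the difference tends to `+∞` and is eventually positive.
-/

open Real Filter

noncomputable def modelPrimitive (p η c x : ℝ) : ℝ :=
  x ^ p * log x / p - x ^ p / p ^ 2 + c * x ^ η / η

theorem hasDerivAt_modelPrimitive {p η x : ℝ} (c : ℝ) (hp : p ≠ 0) (hη : η ≠ 0) (hx : 0 < x) :
    HasDerivAt (modelPrimitive p η c) (x ^ (p - 1) * log x + c * x ^ (η - 1)) x := by
  have hxp := hasDerivAt_rpow_const (x := x) (p := p) (Or.inl hx.ne')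
  have hxη := hasDerivAt_rpow_const (x := x) (p := η) (Or.inl hx.ne')
  refine ((((hxp.mul (hasDerivAt_log hx.ne')).div_const p).sub (hxp.div_const (p ^ 2))).add
    ((hxη.const_mul c).div_const η)).congr_deriv ?_
  rw [rpow_sub_one hx.ne', rpow_sub_one hx.ne']
  field_simp
  ring

theorem integral_eq_modelPrimitive_sub {p η c x : ℝ} {f : ℝ → ℝ} (hp : p ≠ 0) (hη : η ≠ 0)
    (hf : ∀ s, 1 ≤ s → f s = s ^ (p - 1) * log s + c * s ^ (η - 1)) (hx : 1 ≤ x) :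
    ∫ s in (1 : ℝ)..x, f s = modelPrimitive p η c x - modelPrimitive p η c 1 := by
  have hge : ∀ s ∈ Set.uIcc 1 x, 1 ≤ s := fun s hs => by
    rw [Set.uIcc_of_le hx] at hs; exact hs.1
  have hcont : ContinuousOn (fun s => s ^ (p - 1) * log s + c * s ^ (η - 1)) (Set.uIcc 1 x) := by
    fun_prop (disch := exact fun s hs => (zero_lt_one.trans_le (hge s hs)).ne')
  rw [intervalIntegral.integral_congr fun s hs => hf s (hge s hs)]
  exact intervalIntegral.integral_eq_sub_of_hasDerivAt
    (fun s hs => hasDerivAt_modelPrimitive c hp hη (zero_lt_one.trans_le (hge s hs)))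
    hcont.intervalIntegrable

theorem tendsto_rpow_mul_log_add {p η a : ℝ} (b d K : ℝ) (hp : 0 < p) (hηp : η < p) (ha : 0 < a) :
    Tendsto (fun x => a * (x ^ p * log x) + b * x ^ p + d * x ^ η + K) atTop atTop := by
  have hbracket : Tendsto (fun x => a * log x + (b + d * x ^ (-(p - η)))) atTop atTop :=
    (tendsto_log_atTop.const_mul_atTop ha).atTop_add
      (tendsto_const_nhds.add ((tendsto_rpow_neg_atTop (sub_pos.2 hηp)).const_mul d))
  -- `x^p · (a log x + b + d x^(η-p))`, where the bracket tends to `+∞`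
  refine tendsto_atTop_add_const_right _ K <|
    ((tendsto_rpow_atTop hp).atTop_mul_atTop₀ hbracket).congr' ?_
  filter_upwards [eventually_gt_atTop 0] with x hx
  rw [neg_sub, rpow_sub hx]
  field_simp
  ring

theorem mul_modelPrimitive_sub_mul_self_eq {p η c x : ℝ} (ϑ : ℝ) (hp : p ≠ 0) (hη : η ≠ 0)
    (hx : 0 < x) :
    ϑ * (modelPrimitive p η c x - modelPrimitive p η c 1)
        - (x ^ (p - 1) * log x + c * x ^ (η - 1)) * x
      = (ϑ / p - 1) * (x ^ p * log x) + -(ϑ / p ^ 2) * x ^ p + c * (ϑ / η - 1) * x ^ η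
        + -(ϑ * modelPrimitive p η c 1) := by
  generalize modelPrimitive p η c 1 = G₁
  rw [modelPrimitive, rpow_sub_one hx.ne', rpow_sub_one hx.ne']
  field_simp
  ring

/-- For the model nonlinearity `f(x) = x^{p-1} log x + c x^{η-1}` (for `x ≥ 1`,
with `1 < η < p`) and its primitive `F(x) = ∫₁ˣ f(s) ds`, the
Ambrosetti–Rabinowitz condition fails: for every `ϑ > p` and `M ≥ 1` there is
`x ≥ M` with `ϑ F(x) > f(x)·x`. -/
theorem stmt_5
    (p η c : ℝ) (hp : 1 < p) (hη : 1 < η) (hηp : η < p)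
    (f F : ℝ → ℝ)
    (hf : ∀ x : ℝ, 1 ≤ x → f x = x ^ (p - 1) * Real.log x + c * x ^ (η - 1))
    (hF : ∀ x : ℝ, F x = ∫ s in (1:ℝ)..x, f s) :
    ∀ ϑ : ℝ, p < ϑ → ∀ M : ℝ, 1 ≤ M → ∃ x : ℝ, M ≤ x ∧ f x * x < ϑ * F x := by
  intro ϑ hϑ M _
  have hp₀ : 0 < p := zero_lt_one.trans hp
  have hη₀ : η ≠ 0 := (zero_lt_one.trans hη).ne'
  have hgap : Tendsto (fun x => ϑ * F x - f x * x) atTop atTop := by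
    refine (tendsto_rpow_mul_log_add (-(ϑ / p ^ 2)) (c * (ϑ / η - 1))
      (-(ϑ * modelPrimitive p η c 1)) hp₀ hηp
      (sub_pos.2 ((one_lt_div hp₀).2 hϑ))).congr' ?_
    filter_upwards [eventually_ge_atTop 1] with x hx
    rw [hF, integral_eq_modelPrimitive_sub hp₀.ne' hη₀ hf hx, hf x hx,
      mul_modelPrimitive_sub_mul_self_eq ϑ hp₀.ne' hη₀ (by linarith)]
  obtain ⟨x, hxM, hx⟩ := ((eventually_ge_atTop M).and (hgap.eventually_gt_atTop 0)).exists
  exact ⟨x, hxM, sub_pos.1 hx⟩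
end

section
/- Let (Ω, Σ, μ) be a finite measure space, p ≥ 1, C ≥ 0, and let F : Ω × [0,∞) → ℝ be a Carathéodory function (measurable in the first variable, continuous in the second) with F(z,x) ≥ −C for all x ≥ 0 and μ-a.e. z ∈ Ω. Assume F(z,x)/x^{p} → +∞ as x → +∞ uniformly for a.e. z ∈ Ω, i.e. for every K > 0 there is M > 0 such that F(z,x) ≥ K x^{p} for all x ≥ M and a.e. z ∈ Ω. Let u_n : Ω → [0,∞) be measurable functions, let t_n → +∞ be positive reals, and suppose u_n(z)/t_n → v(z) for μ-a.e. z ∈ Ω, where v is measurable with μ({z : v(z) > 0}) > 0. Then (1/t_n^{p}) ∫_Ω F(z, u_n(z)) dμ → +∞ as n → ∞. -/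
/-!
After the shift by `C`, the functions `(F(z,u_n) + C)/t_n^p` are nonnegative. On `{v > 0}` they
tend to `+∞`, because `F(z,u_n)/t_n^p = (F(z,u_n)/u_n^p) · (u_n/t_n)^p` with `u_n → ∞` and
`(u_n/t_n)^p → v^p > 0`. Fatou's lemma then drives their integrals to `+∞`, while the shift only
contributes `C μ(Ω)/t_n^p → 0`.
-/

open MeasureTheory Filter Topology

theorem AEMeasurable.liminf {α δ : Type*} [CompleteLinearOrder α] [TopologicalSpace α]
    [OrderTopology α] [SecondCountableTopology α] [MeasurableSpace α] [BorelSpace α]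
    [MeasurableSpace δ] {μ : Measure δ} {f : ℕ → δ → α} (hf : ∀ n, AEMeasurable (f n) μ) :
    AEMeasurable (fun x => liminf (fun n => f n x) atTop) μ := by
  simp_rw [liminf_eq_iSup_iInf_of_nat']
  exact .iSup fun n => .iInf fun i => hf (i + n)

theorem tendsto_integral_atTop_of_tendsto_atTop {Ω : Type*} [MeasurableSpace Ω] {μ : Measure Ω}
    {g : ℕ → Ω → ℝ} (hg : ∀ n, Integrable (g n) μ) (hg0 : ∀ n, 0 ≤ᵐ[μ] g n) {s : Set Ω}
    (hs : μ s ≠ 0) (hgs : ∀ᵐ z ∂μ, z ∈ s → Tendsto (fun n => g n z) atTop atTop) :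
    Tendsto (fun n => ∫ z, g n z ∂μ) atTop atTop := by
  set f : ℕ → Ω → ENNReal := fun n z => ENNReal.ofReal (g n z)
  have hf : ∀ n, AEMeasurable (f n) μ := fun n => (hg n).aemeasurable.ennreal_ofReal
  have hliminf : ∀ᵐ z ∂μ, z ∈ s → liminf (fun n => f n z) atTop = ⊤ := by
    filter_upwards [hgs] with z hz hzs
    exact (ENNReal.tendsto_ofReal_atTop.comp (hz hzs)).liminf_eq
  have htop : ∫⁻ z, liminf (fun n => f n z) atTop ∂μ = ⊤ :=
    lintegral_eq_top_of_measure_eq_top_ne_zero (.liminf hf)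
      fun h => hs (measure_mono_null_ae hliminf h)
  have hfatou : liminf (fun n => ENNReal.ofReal (∫ z, g n z ∂μ)) atTop = ⊤ := by
    simp_rw [ofReal_integral_eq_lintegral_ofReal (hg _) (hg0 _)]
    exact top_le_iff.1 (htop ▸ lintegral_liminf_le' hf)
  refine tendsto_atTop.2 fun L => ?_
  filter_upwards [eventually_lt_of_lt_liminf (hfatou ▸ ENNReal.ofReal_lt_top (r := L))] with n hn
  exact (ENNReal.ofReal_lt_ofReal_iff'.1 hn).1.le

theorem ae_tendsto_div_rpow_atTop {Ω : Type*} [MeasurableSpace Ω] {μ : Measure Ω}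
    {F : Ω → ℝ → ℝ} {p : ℝ}
    (hF : ∀ K : ℝ, 0 < K → ∃ M : ℝ, 0 < M ∧ ∀ᵐ z ∂μ, ∀ x : ℝ, M ≤ x → K * x ^ p ≤ F z x) :
    ∀ᵐ z ∂μ, Tendsto (fun x => F z x / x ^ p) atTop atTop := by
  choose M hM hFM using fun k : ℕ => hF (k + 1) k.cast_add_one_pos
  filter_upwards [ae_all_iff.2 hFM] with z hz
  refine tendsto_atTop.2 fun b => ?_
  obtain ⟨k, hk⟩ := exists_nat_ge b
  filter_upwards [eventually_ge_atTop (M k)] with x hx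
  have hxp : 0 < x ^ p := Real.rpow_pos_of_pos ((hM k).trans_le hx) p
  exact (le_div_iff₀ hxp).2 ((mul_le_mul_of_nonneg_right (by linarith) hxp.le).trans (hz k x hx))

theorem tendsto_div_rpow_atTop_of_tendsto_div {f : ℝ → ℝ} {p a : ℝ}
    (hf : Tendsto (fun x => f x / x ^ p) atTop atTop) (ha : 0 < a) {x t : ℕ → ℝ}
    (ht : Tendsto t atTop atTop) (hx : Tendsto (fun n => x n / t n) atTop (𝓝 a)) :
    Tendsto (fun n => f (x n) / t n ^ p) atTop atTop := by
  have hxt : Tendsto x atTop atTop := by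
    refine (hx.pos_mul_atTop ha ht).congr' ?_
    filter_upwards [ht.eventually_gt_atTop 0] with n htn
    exact div_mul_cancel₀ _ htn.ne'
  refine ((hf.comp hxt).atTop_mul_pos (Real.rpow_pos_of_pos ha p)
    (hx.rpow_const (.inl ha.ne'))).congr' ?_
  filter_upwards [hxt.eventually_gt_atTop 0, ht.eventually_gt_atTop 0] with n hxn htn
  have hxp : x n ^ p ≠ 0 := (Real.rpow_pos_of_pos hxn p).ne'
  rw [Function.comp_apply, Real.div_rpow hxn.le htn.le]
  field_simp

theorem stmt_7_general
    {Ω : Type*} [MeasurableSpace Ω] (μ : Measure Ω) [IsFiniteMeasure μ]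
    (p C : ℝ) (hp : 1 ≤ p)
    (F : Ω → ℝ → ℝ)
    (hFlb : ∀ᵐ z ∂μ, ∀ x : ℝ, 0 ≤ x → -C ≤ F z x)
    (hFsuper : ∀ K : ℝ, 0 < K → ∃ M : ℝ, 0 < M ∧
      ∀ᵐ z ∂μ, ∀ x : ℝ, M ≤ x → K * x ^ p ≤ F z x)
    (u : ℕ → Ω → ℝ) (hupos : ∀ n z, 0 ≤ u n z)
    (hint : ∀ n, Integrable (fun z => F z (u n z)) μ)
    (t : ℕ → ℝ) (htpos : ∀ n, 0 < t n) (htlim : Tendsto t atTop atTop)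
    (v : Ω → ℝ)
    (hconv : ∀ᵐ z ∂μ, Tendsto (fun n => u n z / t n) atTop (𝓝 (v z)))
    (hvpos : 0 < μ {z | 0 < v z}) :
    Tendsto (fun n => (1 / (t n) ^ p) * ∫ z, F z (u n z) ∂μ) atTop atTop := by
  have htp : Tendsto (fun n => t n ^ p) atTop atTop :=
    (tendsto_rpow_atTop (by linarith)).comp htlim
  have hCt : Tendsto (fun n => C / t n ^ p) atTop (𝓝 0) := tendsto_const_nhds.div_atTop htp
  set g : ℕ → Ω → ℝ := fun n z => (F z (u n z) + C) / t n ^ p with hg_def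
  have hg : ∀ n, Integrable (g n) μ := fun n => ((hint n).add (integrable_const C)).div_const _
  have hg0 : ∀ n, 0 ≤ᵐ[μ] g n := fun n => by
    filter_upwards [hFlb] with z hz
    exact div_nonneg (by linarith [hz _ (hupos n z)]) (Real.rpow_nonneg (htpos n).le p)
  have hgv : ∀ᵐ z ∂μ, z ∈ {z | 0 < v z} → Tendsto (fun n => g n z) atTop atTop := by
    filter_upwards [ae_tendsto_div_rpow_atTop hFsuper, hconv] with z hFz hz hvz
    refine ((tendsto_div_rpow_atTop_of_tendsto_div hFz hvz htlim hz).atTop_add hCt).congr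
      fun n => (add_div _ _ _).symm
  refine ((tendsto_integral_atTop_of_tendsto_atTop hg hg0 hvpos.ne' hgv).atTop_add
    (hCt.const_mul (-μ.real Set.univ))).congr fun n => ?_
  simp only [hg_def, integral_div, integral_add (hint n) (integrable_const C), integral_const,
    smul_eq_mul]
  ring

/-- Fatou-lemma divergence estimate (equations (48)–(49) of the paper): if the
Carathéodory function `F(z,x)` is bounded below by `-C` on `[0,∞)`, grows
superlinearly of order `p` uniformly in `z`, and `u_n/t_n → v` a.e. with `v > 0`
on a set of positive measure and `t_n → +∞`, then
`t_n^{-p} ∫_Ω F(z,u_n(z)) dμ → +∞`. -/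
theorem stmt_7
    {Ω : Type*} [MeasurableSpace Ω] (μ : Measure Ω) [IsFiniteMeasure μ]
    (p C : ℝ) (hp : 1 ≤ p) (hC : 0 ≤ C)
    (F : Ω → ℝ → ℝ)
    (hFmeas : ∀ x : ℝ, Measurable fun z => F z x)
    (hFcont : ∀ᵐ z ∂μ, ContinuousOn (F z) (Set.Ici 0))
    (hFlb : ∀ᵐ z ∂μ, ∀ x : ℝ, 0 ≤ x → -C ≤ F z x)
    (hFsuper : ∀ K : ℝ, 0 < K → ∃ M : ℝ, 0 < M ∧
      ∀ᵐ z ∂μ, ∀ x : ℝ, M ≤ x → K * x ^ p ≤ F z x)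
    (u : ℕ → Ω → ℝ) (humeas : ∀ n, Measurable (u n)) (hupos : ∀ n z, 0 ≤ u n z)
    (hint : ∀ n, Integrable (fun z => F z (u n z)) μ)
    (t : ℕ → ℝ) (htpos : ∀ n, 0 < t n) (htlim : Tendsto t atTop atTop)
    (v : Ω → ℝ) (hvmeas : Measurable v)
    (hconv : ∀ᵐ z ∂μ, Tendsto (fun n => u n z / t n) atTop (𝓝 (v z)))
    (hvpos : 0 < μ {z | 0 < v z}) :
    Tendsto (fun n => (1 / (t n) ^ p) * ∫ z, F z (u n z) ∂μ) atTop atTop :=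
  stmt_7_general μ p C hp F hFlb hFsuper u hupos hint t htpos htlim v hconv hvpos
end
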